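/- For |x| < 1 and |a| < 1 (octonions), the identity B(x,a) = D̄_x ( (x - a|x|²) / |1 - x̄a|⁸ ) holds, where B(x,a) = [6(1 - |a|²|x|²) + 2(1 - x̄a)](1 - x̄a) / |1 - x̄a|^{10}. -/

import Mathlib

noncomputable section
open MeasureTheory Metric
open scoped Quaternion

/-- The octonions, via the Cayley–Dickson construction on the quaternions,
carrying the Euclidean (`L²`) norm. -/
abbrev Octonion : Type := WithLp 2 (ℍ[ℝ] × ℍ[ℝ])

namespace Octonion

def mk (a b : ℍ[ℝ]) : Octonion := (WithLp.equiv 2 (ℍ[ℝ] × ℍ[ℝ])).symm (a, b)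
def p1 (x : Octonion) : ℍ[ℝ] := (WithLp.equiv 2 (ℍ[ℝ] × ℍ[ℝ]) x).1
def p2 (x : Octonion) : ℍ[ℝ] := (WithLp.equiv 2 (ℍ[ℝ] × ℍ[ℝ]) x).2

instance : One Octonion := ⟨mk 1 0⟩
/-- Cayley–Dickson multiplication: `(a,b)(c,d) = (ac - d̄b, da + bc̄)`. -/
instance : Mul Octonion :=
  ⟨fun x y => mk (p1 x * p1 y - star (p2 y) * p2 x) (p2 y * p1 x + p2 x * star (p1 y))⟩

/-- Octonionic conjugation. -/
def conj (x : Octonion) : Octonion := mk (star (p1 x)) (-(p2 x))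

/-- The standard basis `e₀ = 1, e₁, …, e₇` of the octonions. -/
def e : Fin 8 → Octonion
  | 0 => mk 1 0
  | 1 => mk ⟨0,1,0,0⟩ 0
  | 2 => mk ⟨0,0,1,0⟩ 0
  | 3 => mk ⟨0,0,0,1⟩ 0
  | 4 => mk 0 1
  | 5 => mk 0 ⟨0,1,0,0⟩
  | 6 => mk 0 ⟨0,0,1,0⟩
  | 7 => mk 0 ⟨0,0,0,1⟩

/-- The real coordinates of an octonion w.r.t. the basis `e`. -/
def coord (i : Fin 8) (x : Octonion) : ℝ :=
  match i with
  | 0 => (p1 x).re | 1 => (p1 x).imI | 2 => (p1 x).imJ | 3 => (p1 x).imK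
  | 4 => (p2 x).re | 5 => (p2 x).imI | 6 => (p2 x).imJ | 7 => (p2 x).imK

/-- Partial derivative in the direction `e i`. -/
def pd (i : Fin 8) (f : Octonion → Octonion) (x : Octonion) : Octonion :=
  fderiv ℝ f x (e i)

/-- The generalized Cauchy–Riemann operator `Df = ∑ eᵢ ∂f/∂xᵢ`. -/
def D (f : Octonion → Octonion) (x : Octonion) : Octonion := ∑ i, e i * pd i f x

/-- The right-acting Cauchy–Riemann operator `fD = ∑ (∂f/∂xᵢ) eᵢ`. -/
def Dright (f : Octonion → Octonion) (x : Octonion) : Octonion := ∑ i, pd i f x * e i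

/-- The conjugate Cauchy–Riemann operator `D̄f = ∑ ēᵢ ∂f/∂xᵢ`. -/
def Dbar (f : Octonion → Octonion) (x : Octonion) : Octonion := ∑ i, conj (e i) * pd i f x

/-- The Laplacian `Δf = ∑ ∂²f/∂xᵢ²`. -/
def lap (f : Octonion → Octonion) (x : Octonion) : Octonion :=
  ∑ i, fderiv ℝ (fun y => fderiv ℝ f y (e i)) x (e i)

instance : MeasurableSpace Octonion := borel _
instance : BorelSpace Octonion := ⟨rfl⟩
instance : MeasureSpace Octonion := ⟨Measure.addHaar⟩

/-- The surface measure on the unit sphere `S⁷`. -/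
def sphereMeasure : Measure (sphere (0 : Octonion) 1) := (volume : Measure Octonion).toSphere

/-- `ω₈`, the surface area of the unit sphere in `ℝ⁸`. -/
def ω : ℝ := (sphereMeasure Set.univ).toReal

end Octonion

/-- The octonionic Bergman kernel of the unit ball. -/
def bergmanKernel (x a : Octonion) : Octonion :=
  (‖(1 : Octonion) - Octonion.conj x * a‖ ^ 10)⁻¹ •
    (((6 * (1 - ‖a‖ ^ 2 * ‖x‖ ^ 2)) • (1 : Octonion) +
        (2 : ℝ) • ((1 : Octonion) - Octonion.conj x * a)) *
      ((1 : Octonion) - Octonion.conj x * a))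

/-!
Write `u = x̄a` and `w = 1 - u`. For a real function `φ`, `D̄(φ h) = φ D̄h + (D̄φ) h`, and `D̄φ`
is the conjugate of the gradient of `φ`. With `φ = |w|⁻⁸` and `h = x - |x|²a` this gives
`D̄h = 8 - 2u` and `D̄φ = 8 |w|⁻¹⁰ wā`. By alternativity `wā = ā - |a|² x̄`, so `(wā) h` is a real
combination of `1` and `u`. The identity then takes place in the commutative subalgebra `ℝ[u]`,
where it follows from `u² = 2 Re(u) u - |u|²`.
-/

open scoped RealInnerProductSpace

section Gradient

variable {E F : Type*} [NormedAddCommGroup E] [InnerProductSpace ℝ E] [CompleteSpace E]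
  [NormedAddCommGroup F] [InnerProductSpace ℝ F] [CompleteSpace F]

lemma HasFDerivAt.hasGradientAt_norm_sq {f : E → F} {f' : E →L[ℝ] F} {x : E}
    (hf : HasFDerivAt f f' x) :
    HasGradientAt (fun y => ‖f y‖ ^ 2) ((2 : ℝ) • ContinuousLinearMap.adjoint f' (f x)) x := by
  rw [hasGradientAt_iff_hasFDerivAt]
  refine hf.norm_sq.congr_fderiv ?_
  ext v
  simp [ContinuousLinearMap.adjoint_inner_left]

lemma hasGradientAt_norm_sq (x : E) : HasGradientAt (fun y => ‖y‖ ^ 2) ((2 : ℝ) • x) x := by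
  simpa [ContinuousLinearMap.adjoint_id] using (hasFDerivAt_id x).hasGradientAt_norm_sq

lemma HasDerivAt.comp_hasGradientAt {u : ℝ → ℝ} {u' : ℝ} {q : E → ℝ} {g x : E}
    (hu : HasDerivAt u u' (q x)) (hq : HasGradientAt q g x) :
    HasGradientAt (fun y => u (q y)) (u' • g) x := by
  rw [hasGradientAt_iff_hasFDerivAt] at hq ⊢
  refine (hu.comp_hasFDerivAt x hq).congr_fderiv ?_
  ext v
  simp

end Gradient

namespace Octonion

@[simp] lemma p1_add (x y : Octonion) : p1 (x + y) = p1 x + p1 y := rfl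
@[simp] lemma p2_add (x y : Octonion) : p2 (x + y) = p2 x + p2 y := rfl
@[simp] lemma p1_sub (x y : Octonion) : p1 (x - y) = p1 x - p1 y := rfl
@[simp] lemma p2_sub (x y : Octonion) : p2 (x - y) = p2 x - p2 y := rfl
@[simp] lemma p1_smul (r : ℝ) (x : Octonion) : p1 (r • x) = r • p1 x := rfl
@[simp] lemma p2_smul (r : ℝ) (x : Octonion) : p2 (r • x) = r • p2 x := rfl
@[simp] lemma p1_zero : p1 (0 : Octonion) = 0 := rfl
@[simp] lemma p2_zero : p2 (0 : Octonion) = 0 := rfl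
@[simp] lemma p1_one : p1 (1 : Octonion) = 1 := rfl
@[simp] lemma p2_one : p2 (1 : Octonion) = 0 := rfl
@[simp] lemma p1_mul (x y : Octonion) : p1 (x * y) = p1 x * p1 y - star (p2 y) * p2 x := rfl
@[simp] lemma p2_mul (x y : Octonion) : p2 (x * y) = p2 y * p1 x + p2 x * star (p1 y) := rfl
@[simp] lemma p1_conj (x : Octonion) : p1 (conj x) = star (p1 x) := rfl
@[simp] lemma p2_conj (x : Octonion) : p2 (conj x) = -p2 x := rfl

@[ext] lemma ext {x y : Octonion} (h1 : p1 x = p1 y) (h2 : p2 x = p2 y) : x = y :=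
  (WithLp.equiv 2 (ℍ[ℝ] × ℍ[ℝ])).injective (Prod.ext h1 h2)

lemma inner_def (x y : Octonion) : ⟪x, y⟫ = ⟪p1 x, p1 y⟫ + ⟪p2 x, p2 y⟫ :=
  WithLp.prod_inner_apply x y

lemma norm_sq_eq (x : Octonion) :
    ‖x‖ ^ 2 = Quaternion.normSq (p1 x) + Quaternion.normSq (p2 x) := by
  rw [← real_inner_self_eq_norm_sq, inner_def, Quaternion.inner_self, Quaternion.inner_self]

protected lemma norm_one : ‖(1 : Octonion)‖ = 1 := by
  have h := norm_sq_eq 1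
  simp only [p1_one, p2_one, map_one, map_zero, add_zero] at h
  exact (pow_eq_one_iff_of_nonneg (norm_nonneg _) two_ne_zero).1 h

protected lemma mul_add (x y z : Octonion) : x * (y + z) = x * y + x * z := by
  ext : 1 <;> simp only [p1_mul, p2_mul, p1_add, p2_add, star_add, _root_.mul_add,
    _root_.add_mul] <;> abel

protected lemma add_mul (x y z : Octonion) : (x + y) * z = x * z + y * z := by
  ext : 1 <;> simp only [p1_mul, p2_mul, p1_add, p2_add, _root_.mul_add, _root_.add_mul] <;> abel

protected lemma mul_sub (x y z : Octonion) : x * (y - z) = x * y - x * z := by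
  ext : 1 <;> simp only [p1_mul, p2_mul, p1_sub, p2_sub, star_sub, _root_.mul_sub,
    _root_.sub_mul] <;> abel

protected lemma sub_mul (x y z : Octonion) : (x - y) * z = x * z - y * z := by
  ext : 1 <;> simp only [p1_mul, p2_mul, p1_sub, p2_sub, _root_.mul_sub, _root_.sub_mul] <;> abel

protected lemma mul_smul (r : ℝ) (x y : Octonion) : x * (r • y) = r • (x * y) := by
  ext : 1 <;> simp only [p1_mul, p2_mul, p1_smul, p2_smul, Quaternion.star_smul, smul_sub,
    smul_add, mul_smul_comm, smul_mul_assoc]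

protected lemma smul_mul (r : ℝ) (x y : Octonion) : (r • x) * y = r • (x * y) := by
  ext : 1 <;> simp only [p1_mul, p2_mul, p1_smul, p2_smul, smul_sub, smul_add, mul_smul_comm,
    smul_mul_assoc]

protected lemma mul_zero (x : Octonion) : x * 0 = 0 := by ext <;> simp

protected lemma one_mul (x : Octonion) : 1 * x = x := by ext <;> simp

protected lemma mul_one (x : Octonion) : x * 1 = x := by ext <;> simp

lemma conj_add (x y : Octonion) : conj (x + y) = conj x + conj y := by
  ext <;> simp [add_comm]

lemma conj_smul (r : ℝ) (x : Octonion) : conj (r • x) = r • conj x := by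
  ext <;> simp [Quaternion.star_smul]

lemma conj_conj (x : Octonion) : conj (conj x) = x := by ext <;> simp

section ComponentIdentities

attribute [local simp] Quaternion.re_mul Quaternion.imI_mul Quaternion.imJ_mul
  Quaternion.imK_mul Quaternion.normSq_def' Quaternion.inner_def

lemma conj_mul (x y : Octonion) : conj (x * y) = conj y * conj x := by
  ext <;> simp

lemma conj_mul_self (x : Octonion) : conj x * x = ‖x‖ ^ 2 • (1 : Octonion) := by
  rw [norm_sq_eq]; ext <;> simp <;> ring

lemma mul_mul_conj (x y : Octonion) : x * y * conj y = ‖y‖ ^ 2 • x := by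
  rw [norm_sq_eq]; ext <;> simp <;> ring

lemma mul_self_eq (u : Octonion) : u * u = (2 * ⟪1, u⟫) • u - ‖u‖ ^ 2 • (1 : Octonion) := by
  rw [norm_sq_eq, inner_def]; ext <;> simp <;> ring

lemma conj_eq (x : Octonion) : conj x = (2 * ⟪1, x⟫) • (1 : Octonion) - x := by
  rw [inner_def]
  ext <;> simp
  ring

lemma norm_mul_sq (x y : Octonion) : ‖x * y‖ ^ 2 = ‖x‖ ^ 2 * ‖y‖ ^ 2 := by
  simp only [norm_sq_eq]; simp; ring

lemma norm_conj_sq (x : Octonion) : ‖conj x‖ ^ 2 = ‖x‖ ^ 2 := by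
  simp only [norm_sq_eq]; simp

lemma inner_mul_right (u v a : Octonion) : ⟪u, v * a⟫ = ⟪u * conj a, v⟫ := by
  simp only [inner_def]; simp; ring

lemma inner_conj_right (u v : Octonion) : ⟪u, conj v⟫ = ⟪conj u, v⟫ := by
  simp only [inner_def]; simp

end ComponentIdentities

lemma coord_e (i j : Fin 8) : coord j (e i) = if i = j then 1 else 0 := by
  fin_cases i <;> fin_cases j <;> rfl

lemma ext_coord {x y : Octonion} (h : ∀ i, coord i x = coord i y) : x = y := by
  ext
  exacts [h 0, h 1, h 2, h 3, h 4, h 5, h 6, h 7]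

def coordₗ (i : Fin 8) : Octonion →ₗ[ℝ] ℝ where
  toFun := coord i
  map_add' x y := by fin_cases i <;> rfl
  map_smul' r x := by fin_cases i <;> rfl

lemma inner_eq_sum_coord (x y : Octonion) : ⟪x, y⟫ = ∑ i, coord i x * coord i y := by
  rw [inner_def, Quaternion.inner_def, Quaternion.inner_def, Fin.sum_univ_eight]
  simp [coord]
  ring

lemma inner_e (x : Octonion) (i : Fin 8) : ⟪x, e i⟫ = coord i x := by
  simp only [inner_eq_sum_coord, coord_e, mul_ite, mul_one, mul_zero, Finset.sum_ite_eq,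
    Finset.mem_univ, if_true]

lemma sum_coord_smul_e (x : Octonion) : ∑ i, coord i x • e i = x := by
  refine ext_coord fun j => ?_
  change coordₗ j _ = _
  simp [map_sum, coordₗ, coord_e]

lemma conj_e_mul_e (i : Fin 8) : conj (e i) * e i = 1 := by
  rw [conj_mul_self, ← real_inner_self_eq_norm_sq, inner_e, coord_e, if_pos rfl, one_smul]

def conjL : Octonion →L[ℝ] Octonion :=
  LinearMap.toContinuousLinearMap
    { toFun := conj
      map_add' := conj_add
      map_smul' := conj_smul }

def mulRightL (a : Octonion) : Octonion →L[ℝ] Octonion :=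
  LinearMap.toContinuousLinearMap
    { toFun := (· * a)
      map_add' := fun x y => Octonion.add_mul x y a
      map_smul' := fun r x => Octonion.smul_mul r x a }

@[simp] lemma conjL_apply (x : Octonion) : conjL x = conj x := rfl

@[simp] lemma mulRightL_apply (a x : Octonion) : mulRightL a x = x * a := rfl

protected lemma sum_mul {ι : Type*} (s : Finset ι) (f : ι → Octonion) (y : Octonion) :
    (∑ i ∈ s, f i) * y = ∑ i ∈ s, f i * y :=
  map_sum (mulRightL y) f s

lemma adjoint_conjL : ContinuousLinearMap.adjoint conjL = conjL :=
  ((ContinuousLinearMap.eq_adjoint_iff conjL conjL).2 fun u v =>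
    (inner_conj_right u v).symm).symm

lemma adjoint_mulRightL (a : Octonion) :
    ContinuousLinearMap.adjoint (mulRightL a) = mulRightL (conj a) :=
  ((ContinuousLinearMap.eq_adjoint_iff _ _).2 fun u v => by
    rw [mulRightL_apply, mulRightL_apply, inner_mul_right]).symm

lemma sum_inner_smul_conj_e (x : Octonion) : ∑ i, ⟪x, e i⟫ • conj (e i) = conj x := by
  simp only [inner_e, ← conjL_apply, ← map_smul, ← map_sum, sum_coord_smul_e]

lemma sum_conj_e_mul_e : ∑ i, conj (e i) * e i = (8 : ℝ) • (1 : Octonion) := by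
  rw [Finset.sum_congr rfl fun i _ => conj_e_mul_e i, Finset.sum_const, Finset.card_univ,
    Fintype.card_fin, ← Nat.cast_smul_eq_nsmul ℝ]
  norm_num

lemma Dbar_sub {f g : Octonion → Octonion} {x : Octonion} (hf : DifferentiableAt ℝ f x)
    (hg : DifferentiableAt ℝ g x) : Dbar (fun y => f y - g y) x = Dbar f x - Dbar g x := by
  simp only [Dbar, pd, fderiv_fun_sub hf hg, sub_apply, Octonion.mul_sub, Finset.sum_sub_distrib]

lemma Dbar_id (x : Octonion) : Dbar (fun y => y) x = (8 : ℝ) • (1 : Octonion) := by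
  simp [Dbar, pd, sum_conj_e_mul_e]

lemma Dbar_const (c x : Octonion) : Dbar (fun _ => c) x = 0 := by
  simp [Dbar, pd, Octonion.mul_zero]

lemma Dbar_smul {φ : Octonion → ℝ} {h : Octonion → Octonion} {x : Octonion}
    (hφ : DifferentiableAt ℝ φ x) (hh : DifferentiableAt ℝ h x) :
    Dbar (fun y => φ y • h y) x =
      φ x • Dbar h x + Dbar (fun y => φ y • (1 : Octonion)) x * h x := by
  simp only [Dbar, pd, fderiv_fun_smul hφ hh, fderiv_smul_const hφ, add_apply, smul_apply,
    ContinuousLinearMap.smulRight_apply, Octonion.mul_add, Octonion.mul_smul, Octonion.mul_one,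
    Finset.sum_add_distrib, Finset.smul_sum, Octonion.sum_mul, Octonion.smul_mul]

lemma Dbar_smul_one {φ : Octonion → ℝ} {g x : Octonion} (hφ : HasGradientAt φ g x) :
    Dbar (fun y => φ y • (1 : Octonion)) x = conj g := by
  simp only [Dbar, pd, fderiv_smul_const hφ.differentiableAt, ContinuousLinearMap.smulRight_apply,
    HasGradientAt.fderiv_apply hφ, Octonion.mul_smul, Octonion.mul_one, sum_inner_smul_conj_e]

lemma Dbar_sub_norm_sq_smul (a x : Octonion) :
    Dbar (fun y => y - ‖y‖ ^ 2 • a) x = (8 : ℝ) • (1 : Octonion) - (2 : ℝ) • (conj x * a) := by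
  have hn := hasGradientAt_norm_sq x
  rw [Dbar_sub differentiableAt_fun_id (hn.differentiableAt.smul_const a), Dbar_id,
    Dbar_smul hn.differentiableAt (differentiableAt_const a), Dbar_const, Dbar_smul_one hn,
    conj_smul, Octonion.smul_mul, smul_zero, zero_add]

lemma hasGradientAt_norm_sq_one_sub_conj_mul (a x : Octonion) :
    HasGradientAt (fun y => ‖1 - conj y * a‖ ^ 2)
      (-(2 : ℝ) • conj ((1 - conj x * a) * conj a)) x := by
  have hw : HasFDerivAt (fun y => 1 - conj y * a) (-(mulRightL a ∘L conjL)) x :=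
    (mulRightL a ∘L conjL).hasFDerivAt.const_sub 1
  convert hw.hasGradientAt_norm_sq using 1
  simp [ContinuousLinearMap.adjoint_comp, adjoint_conjL, adjoint_mulRightL]

lemma hasGradientAt_inv_norm_one_sub_conj_mul_pow (k : ℕ) {a x : Octonion}
    (hw : 1 - conj x * a ≠ 0) :
    HasGradientAt (fun y => (‖1 - conj y * a‖ ^ (2 * k))⁻¹)
      ((2 * k / ‖1 - conj x * a‖ ^ (2 * k + 2)) • conj ((1 - conj x * a) * conj a)) x := by
  simp only [pow_mul, pow_add]
  set t := ‖1 - conj x * a‖ ^ 2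
  have ht : t ≠ 0 := by positivity
  have hu : HasDerivAt (fun s : ℝ => (s ^ k)⁻¹) (-(k * t ^ (k - 1)) / (t ^ k) ^ 2) t :=
    (hasDerivAt_pow k t).inv (pow_ne_zero k ht)
  have hcoef : 2 * k / (t ^ k * t) = -(k * t ^ (k - 1)) / (t ^ k) ^ 2 * -2 := by
    rcases k with _ | k
    · simp
    · rw [Nat.add_sub_cancel]
      field_simp
      ring
  rw [hcoef, ← smul_smul]
  exact hu.comp_hasGradientAt (q := fun y => ‖1 - conj y * a‖ ^ 2)
    (hasGradientAt_norm_sq_one_sub_conj_mul a x)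

lemma one_sub_conj_mul_ne_zero {x a : Octonion} (hx : ‖x‖ < 1) (ha : ‖a‖ < 1) :
    1 - conj x * a ≠ 0 := by
  intro h
  have h1 : ‖conj x * a‖ ^ 2 = 1 := by rw [← sub_eq_zero.1 h, Octonion.norm_one, one_pow]
  rw [norm_mul_sq, norm_conj_sq] at h1
  have hx2 : ‖x‖ ^ 2 < 1 := pow_lt_one₀ (norm_nonneg x) hx two_ne_zero
  have ha2 : ‖a‖ ^ 2 ≤ 1 := pow_le_one₀ (norm_nonneg a) ha.le
  exact (mul_lt_one_of_nonneg_of_lt_one_left (sq_nonneg _) hx2 ha2).ne h1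

lemma one_sub_conj_mul_mul_conj_mul (x a : Octonion) :
    (1 - conj x * a) * conj a * (x - ‖x‖ ^ 2 • a) =
      (2 * ⟪1, conj x * a⟫ - 2 * (‖x‖ ^ 2 * ‖a‖ ^ 2)) • (1 : Octonion)
        - (1 - ‖x‖ ^ 2 * ‖a‖ ^ 2) • (conj x * a) := by
  have hax : conj a * x = conj (conj x * a) := by rw [conj_mul, conj_conj]
  rw [Octonion.sub_mul, Octonion.one_mul, mul_mul_conj, Octonion.mul_sub, Octonion.sub_mul,
    Octonion.sub_mul, Octonion.mul_smul, Octonion.mul_smul, Octonion.smul_mul, Octonion.smul_mul,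
    conj_mul_self, conj_mul_self, hax, conj_eq]
  match_scalars <;> ring

lemma bergman_numerator_eq (x a : Octonion) :
    ((6 * (1 - ‖a‖ ^ 2 * ‖x‖ ^ 2)) • (1 : Octonion) + (2 : ℝ) • (1 - conj x * a))
        * (1 - conj x * a) =
      ‖1 - conj x * a‖ ^ 2 • ((8 : ℝ) • (1 : Octonion) - (2 : ℝ) • (conj x * a))
        + (8 : ℝ) • ((1 - conj x * a) * conj a * (x - ‖x‖ ^ 2 • a)) := by
  have hu : ‖conj x * a‖ ^ 2 = ‖x‖ ^ 2 * ‖a‖ ^ 2 := by rw [norm_mul_sq, norm_conj_sq]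
  rw [one_sub_conj_mul_mul_conj_mul, norm_sub_sq_real, Octonion.norm_one, hu]
  simp only [Octonion.add_mul, Octonion.sub_mul, Octonion.mul_sub, Octonion.smul_mul,
    Octonion.one_mul, Octonion.mul_one, mul_self_eq, hu]
  match_scalars <;> ring

end Octonion

/-- `B(x,a) = D̄ₓ((x - a|x|²)/|1 - x̄a|⁸)` for `|x| < 1`, `|a| < 1`. -/
theorem bergman_kernel_eq_dbar (x a : Octonion) (hx : ‖x‖ < 1) (ha : ‖a‖ < 1) :
    bergmanKernel x a =
      Octonion.Dbar (fun y =>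
        (‖(1 : Octonion) - Octonion.conj y * a‖ ^ 8)⁻¹ • (y - (‖y‖ ^ 2) • a)) x := by
  open Octonion in
  have hw := one_sub_conj_mul_ne_zero hx ha
  have hφ := hasGradientAt_inv_norm_one_sub_conj_mul_pow 4 hw
  norm_num at hφ
  have hh : DifferentiableAt ℝ (fun y : Octonion => y - ‖y‖ ^ 2 • a) x :=
    differentiableAt_fun_id.sub ((hasGradientAt_norm_sq x).differentiableAt.smul_const a)
  rw [Dbar_smul hφ.differentiableAt hh, Dbar_smul_one hφ, Dbar_sub_norm_sq_smul, conj_smul,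
    conj_conj, bergmanKernel, bergman_numerator_eq, smul_add, smul_smul, smul_smul,
    Octonion.smul_mul]
  have hn : ‖1 - conj x * a‖ ≠ 0 := norm_ne_zero_iff.2 hw
  congr 2 <;> field_simp
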